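/- arXiv:math/0209289 — 3 statements merged into one kernel-verified Lean document; each statement's English description precedes it below -/
import Mathlib

section
/- Let θ be a smooth 1-form and K a smooth function on a 2-dimensional manifold M, and let ω₁, ω₂ be smooth 1-forms with ω₁ ∧ ω₂ nowhere zero, such that dθ = K ω₁ ∧ ω₂. If dK = 3K θ on M, then K = 0 identically on M. -/
/-!
Chart-level formalization of planar web geometry: the 2-manifold is (an open
subset `U` of) `V = ℝ × ℝ`; 1-forms are smooth maps `V → (V →L[ℝ] ℝ)`;
`dOne` is the exterior derivative of a 1-form and `wedge` the wedge product
of two 1-forms, both evaluated at a point on a pair of tangent vectors.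
-/

noncomputable section

abbrev V : Type := ℝ × ℝ

abbrev OneForm : Type := V → (V →L[ℝ] ℝ)

/-- Exterior derivative of a 1-form, evaluated at `x` on vectors `u, v`. -/
def dOne (ω : OneForm) : V → V → V → ℝ :=
  fun x u v => (fderiv ℝ ω x u) v - (fderiv ℝ ω x v) u

/-- Wedge product of two 1-forms, evaluated at `x` on vectors `u, v`. -/
def wedge (ω η : OneForm) : V → V → V → ℝ :=
  fun x u v => ω x u * η x v - ω x v * η x u

/-!
Since `d² = 0`, applying `d` to `dK = 3Kθ` gives `0 = 3 dK ∧ θ + 3K dθ`. The first term is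
`9K θ ∧ θ = 0`, and `dθ = K ω₁ ∧ ω₂`, so `3K² ω₁ ∧ ω₂ = 0`; as `ω₁ ∧ ω₂` vanishes nowhere, `K = 0`.
-/

open Filter Topology

theorem dOne_congr_of_eventuallyEq {ω η : OneForm} {x : V} (h : ω =ᶠ[𝓝 x] η) :
    dOne ω x = dOne η x := by
  funext u v
  simp only [dOne, h.fderiv_eq]

theorem wedge_eq_zero_of_apply_eq_smul {ω η : OneForm} {x : V} {c : ℝ} (h : ω x = c • η x)
    (u v : V) : wedge ω η x u v = 0 := by
  simp only [wedge, h, smul_apply, smul_eq_mul]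
  ring

theorem dOne_smul {g : V → ℝ} {ω : OneForm} {x : V} (hg : DifferentiableAt ℝ g x)
    (hω : DifferentiableAt ℝ ω x) (u v : V) :
    dOne (fun y => g y • ω y) x u v = g x * dOne ω x u v + wedge (fderiv ℝ g) ω x u v := by
  have hgω : fderiv ℝ (fun y => g y • ω y) x =
      g x • fderiv ℝ ω x + (fderiv ℝ g x).smulRight (ω x) := fderiv_smul hg hω
  simp only [dOne, wedge, hgω, add_apply, smul_apply,
    ContinuousLinearMap.smulRight_apply, smul_eq_mul]
  ring

theorem dOne_fderiv_eq_zero {f : V → ℝ} {x : V} (hf : ∀ᶠ y in 𝓝 x, DifferentiableAt ℝ f y)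
    (hf' : DifferentiableAt ℝ (fderiv ℝ f) x) (u v : V) : dOne (fderiv ℝ f) x u v = 0 :=
  sub_eq_zero.mpr <| second_derivative_symmetric_of_eventually
    (hf.mono fun _ hy => hy.hasFDerivAt) hf'.hasFDerivAt u v

theorem mul_dOne_eq_zero_of_fderiv_eq_smul {K : V → ℝ} {θ : OneForm} {x : V} {c : ℝ}
    (hK : ∀ᶠ y in 𝓝 x, DifferentiableAt ℝ K y) (hθ : DifferentiableAt ℝ θ x)
    (hdK : fderiv ℝ K =ᶠ[𝓝 x] fun y => (c * K y) • θ y) (u v : V) :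
    c * K x * dOne θ x u v = 0 := by
  have hcK : DifferentiableAt ℝ (fun y => c * K y) x := hK.self_of_nhds.const_mul c
  have hdd : dOne (fun y => (c * K y) • θ y) x u v = 0 := by
    rw [← dOne_congr_of_eventuallyEq hdK]
    exact dOne_fderiv_eq_zero hK ((hcK.smul hθ).congr_of_eventuallyEq hdK) u v
  have hdcK : fderiv ℝ (fun y => c * K y) x = (c * (c * K x)) • θ x := by
    rw [fderiv_const_mul hK.self_of_nhds, hdK.self_of_nhds, smul_smul]
  rwa [dOne_smul hcK hθ, wedge_eq_zero_of_apply_eq_smul hdcK, add_zero] at hdd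

theorem curvature_vanishes_of_dK_eq_three_K_theta_general
    (U : Set V) (hU : IsOpen U)
    (θ ω₁ ω₂ : OneForm) (K : V → ℝ)
    (hθ : ContDiffOn ℝ (⊤ : ℕ∞) θ U)
    (hK : ContDiffOn ℝ (⊤ : ℕ∞) K U)
    (hnz : ∀ x ∈ U, ∃ u v : V, wedge ω₁ ω₂ x u v ≠ 0)
    (hdθ : ∀ x ∈ U, ∀ u v : V, dOne θ x u v = K x * wedge ω₁ ω₂ x u v)
    (hdK : ∀ x ∈ U, ∀ u : V, fderiv ℝ K x u = 3 * K x * θ x u) :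
    ∀ x ∈ U, K x = 0 := by
  intro x hx
  obtain ⟨u, v, huv⟩ := hnz x hx
  have hUx : U ∈ 𝓝 x := hU.mem_nhds hx
  have hKd : ∀ᶠ y in 𝓝 x, DifferentiableAt ℝ K y :=
    eventually_of_mem hUx fun y hy =>
      (hK.contDiffAt (hU.mem_nhds hy)).differentiableAt (by simp)
  have hθd : DifferentiableAt ℝ θ x := (hθ.contDiffAt hUx).differentiableAt (by simp)
  have hdK' : fderiv ℝ K =ᶠ[𝓝 x] fun y => (3 * K y) • θ y :=
    eventually_of_mem hUx fun y hy => ContinuousLinearMap.ext fun w => by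
      simp only [hdK y hy w, smul_apply, smul_eq_mul]
  have hK2 : 3 * K x * (K x * wedge ω₁ ω₂ x u v) = 0 := by
    rw [← hdθ x hx]
    exact mul_dOne_eq_zero_of_fderiv_eq_smul hKd hθd hdK' u v
  simpa [huv] using hK2

/-- if `dθ = K ω₁∧ω₂` with `ω₁∧ω₂` nowhere zero and
`dK = 3Kθ` (vanishing covariant derivatives of the weight-3 relative
invariant `K`), then `K = 0` identically. -/
theorem curvature_vanishes_of_dK_eq_three_K_theta
    (U : Set V) (hU : IsOpen U)
    (θ ω₁ ω₂ : OneForm) (K : V → ℝ)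
    (hθ : ContDiffOn ℝ (⊤ : ℕ∞) θ U) (hω₁ : ContDiffOn ℝ (⊤ : ℕ∞) ω₁ U)
    (hω₂ : ContDiffOn ℝ (⊤ : ℕ∞) ω₂ U) (hK : ContDiffOn ℝ (⊤ : ℕ∞) K U)
    (hnz : ∀ x ∈ U, ∃ u v : V, wedge ω₁ ω₂ x u v ≠ 0)
    (hdθ : ∀ x ∈ U, ∀ u v : V, dOne θ x u v = K x * wedge ω₁ ω₂ x u v)
    (hdK : ∀ x ∈ U, ∀ u : V, fderiv ℝ K x u = 3 * K x * θ x u) :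
    ∀ x ∈ U, K x = 0 :=
  curvature_vanishes_of_dK_eq_three_K_theta_general U hU θ ω₁ ω₂ K hθ hK hnz hdθ hdK
end
end

section
/- Linearizability of Mayrhofer webs (algebraic core): with K = K₁ = K₂ = 0 and the values a_{ij} and a_{ijk} from the Mayrhofer relations (a₁₁ = a₁((1−2a)a₁+aa₂)/(a−a²), a₁₂ = a₁a₂/a, a₂₂ = a₂(a₁−aa₂)/(a−a²), a₁₁₁ = ((6a²−6a+1)a₁³+(4a−6a²)a₁²a₂+a²a₁a₂²)/(a−a²)², a₁₁₂ = a₂a₁₁/a, a₁₂₂ = a₁a₂₂/a, a₂₂₂ = (a₁²a₂−2aa₁a₂²+a²a₂³)/(a−a²)²), the two Akivis–Goldberg–Lychagin linearizability expressions for K₁ and K₂ evaluate identically to zero as rational functions of a, a₁, a₂ (for a ≠ 0, 1). -/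
/-!
The Akivis–Goldberg–Lychagin linearizability expressions for the covariant
derivatives `K₁`, `K₂` of the curvature of a planar 4-web (equations (24) and
(25) of the paper), as rational expressions in the curvature `K`, the basic
invariant `a`, and its covariant derivatives `a₁, a₂, a_{ij}, a_{ijk}`.
-/

noncomputable def K₁lin (K a a₁ a₂ a₁₁ a₁₂ a₂₂ a₁₁₁ a₁₁₂ a₁₂₂ : ℝ) : ℝ :=
  (1/(a - a^2)) * ((1/3) * (a₁*(1-a) + a*a₂) * K - a₁₁₁ + (2+a)*a₁₁₂ - 2*a*a₁₂₂)
  + (1/(a - a^2)^2) * (((4-6*a)*a₁ + (-2+3*a+a^2)*a₂)*a₁₁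
      + ((-6+7*a+2*a^2)*a₁ + (2*a-3*a^2)*a₂)*a₁₂
      + (2*a*(1-a)*a₁ - 2*a^2*a₂)*a₂₂)
  + (1/(a - a^2)^3) * ((-3+8*a-6*a^2)*a₁^3 - 2*a^3*a₂^3
      + (6-15*a+9*a^2+2*a^3)*a₁^2*a₂ + (-2*a+6*a^2-3*a^3)*a₁*a₂^2)

noncomputable def K₂lin (K a a₁ a₂ a₁₁ a₁₂ a₂₂ a₁₁₂ a₁₂₂ a₂₂₂ : ℝ) : ℝ :=
  (1/(a - a^2)) * ((1/3) * (a₁ + a₂*(a-1)) * K + 2*a₁₁₂ - (2*a+1)*a₁₂₂ + a*a₂₂₂)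
  + (1/(a - a^2)^2) * ((2*a₁ + (2*a-2)*a₂)*a₁₁
      + ((-5+6*a)*a₁ + (2-3*a-2*a^2)*a₂)*a₁₂
      + ((1-a-2*a^2)*a₁ + 2*a^2*a₂)*a₂₂)
  + (1/(a - a^2)^3) * ((4*a-2)*a₁^3 + a^3*a₂^3
      + (5-12*a+6*a^2)*a₁^2*a₂ + (-2+5*a-3*a^2-2*a^3)*a₁*a₂^2)

/-- with `K = K₁ = K₂ = 0` and the Mayrhofer values of the
`a_{ij}` and `a_{ijk}`, the two AGL linearizability expressions vanish
identically. -/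
theorem mayrhofer_satisfies_linearizability (a a₁ a₂ : ℝ)
    (h0 : a ≠ 0) (h1 : a ≠ 1) :
    let a₁₁ := a₁ * ((1 - 2*a)*a₁ + a*a₂) / (a - a^2)
    let a₁₂ := a₁ * a₂ / a
    let a₂₂ := a₂ * (a₁ - a*a₂) / (a - a^2)
    let a₁₁₁ := ((6*a^2 - 6*a + 1)*a₁^3 + (4*a - 6*a^2)*a₁^2*a₂
        + a^2*a₁*a₂^2) / (a - a^2)^2
    let a₁₁₂ := a₂ * a₁₁ / a
    let a₁₂₂ := a₁ * a₂₂ / a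
    let a₂₂₂ := (a₁^2*a₂ - 2*a*a₁*a₂^2 + a^2*a₂^3) / (a - a^2)^2
    K₁lin 0 a a₁ a₂ a₁₁ a₁₂ a₂₂ a₁₁₁ a₁₁₂ a₁₂₂ = 0 ∧
    K₂lin 0 a a₁ a₂ a₁₁ a₁₂ a₂₂ a₁₁₂ a₁₂₂ a₂₂₂ = 0 := by
  have ha : a - a^2 ≠ 0 := by
    intro h
    rcases mul_eq_zero.mp (by linear_combination h : a * (1 - a) = 0) with h'|h'
    · exact h0 h'
    · exact h1 (by linarith)
  constructor
  · unfold K₁lin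
    field_simp
    ring
  · unfold K₂lin
    field_simp
    ring
end

section
/- If the covariant derivatives of the basic invariant a of a planar 4-web satisfy a₂ = 0 and the AGL linearizability conditions hold with K = K₁ = K₂ = 0 (and consequently a₁₂ = a₂₂ = a₁₁₂ = a₁₂₂ = a₂₂₂ = 0), then necessarily a₁₁ = (1−2a)a₁²/(a−a²) and a₁₁₁ = (6a²−6a+1)a₁³/(a−a²)²; i.e., a linearizable APW₁ web is an MW₁ web. -/
lemma self_sub_sq_ne_zero {a : ℝ} (h0 : a ≠ 0) (h1 : a ≠ 1) : a - a^2 ≠ 0 := by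
  have hfactor : a - a^2 = a * (1 - a) := by ring
  rw [hfactor]
  exact mul_ne_zero h0 (sub_ne_zero.mpr h1.symm)

section APW1

variable {a : ℝ} (a₁ a₁₁ a₁₁₁ : ℝ)

lemma K₂lin_APW1 :
    K₂lin 0 a a₁ 0 a₁₁ 0 0 0 0 0
      = 2 * a₁ * (a₁₁ * (a - a^2) - (1 - 2*a) * a₁^2) / (a - a^2)^3 := by
  -- for `a - a^2 = 0` both sides are junk divisions by zero
  rcases eq_or_ne (a - a^2) 0 with hd | hd
  · simp [K₂lin, hd]
  · unfold K₂lin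
    field_simp
    ring

lemma K₁lin_APW1 :
    K₁lin 0 a a₁ 0 a₁₁ 0 0 a₁₁₁ 0 0
      = ((4 - 6*a) * a₁ * (a₁₁ * (a - a^2)) + (-3 + 8*a - 6*a^2) * a₁^3
          - a₁₁₁ * (a - a^2)^2) / (a - a^2)^3 := by
  rcases eq_or_ne (a - a^2) 0 with hd | hd
  · simp [K₁lin, hd]
  · unfold K₁lin
    field_simp
    ring

end APW1

/-- a linearizable `APW₁` web (`K = K₁ = K₂ = 0`, `a₂ = 0`,
hence `a₁₂ = a₂₂ = a₁₁₂ = a₁₂₂ = a₂₂₂ = 0`) is an `MW₁` web. -/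
theorem linearizable_APW1_is_MW1 (a a₁ a₁₁ a₁₁₁ : ℝ)
    (h0 : a ≠ 0) (h1 : a ≠ 1) (ha₁ : a₁ ≠ 0)
    (hlin₁ : K₁lin 0 a a₁ 0 a₁₁ 0 0 a₁₁₁ 0 0 = 0)
    (hlin₂ : K₂lin 0 a a₁ 0 a₁₁ 0 0 0 0 0 = 0) :
    a₁₁ = (1 - 2*a) * a₁^2 / (a - a^2) ∧
    a₁₁₁ = (6*a^2 - 6*a + 1) * a₁^3 / (a - a^2)^2 := by
  have hd := self_sub_sq_ne_zero h0 h1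
  rw [K₂lin_APW1 a₁ a₁₁, div_eq_zero_iff, or_iff_left (pow_ne_zero 3 hd)] at hlin₂
  rw [K₁lin_APW1 a₁ a₁₁ a₁₁₁, div_eq_zero_iff, or_iff_left (pow_ne_zero 3 hd)] at hlin₁
  have ha₁₁ : a₁₁ * (a - a^2) = (1 - 2*a) * a₁^2 :=
    sub_eq_zero.mp ((mul_eq_zero.mp hlin₂).resolve_left (mul_ne_zero two_ne_zero ha₁))
  have ha₁₁₁ : a₁₁₁ * (a - a^2)^2 = (6*a^2 - 6*a + 1) * a₁^3 := by
    rw [ha₁₁] at hlin₁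
    linear_combination -hlin₁
  exact ⟨(eq_div_iff hd).mpr ha₁₁, (eq_div_iff (pow_ne_zero 2 hd)).mpr ha₁₁₁⟩
end
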